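/- (Lemma 2) Let β ∈ ℝ, X > 2, and h ∈ ℕ with 2 < h, and let N+1 be the number of binary digits of h (so 2^N ≤ h < 2^{N+1}). Set X_{N+1} = X·2^{-(N+1)} and β_{N+1} = 2^{N+1} β. Then |S(X,h,β)| ≪ h^{log₂3} |S(X_{N+1}, 1, β_{N+1})| + h^{log₂3} |S(X_{N+1}, 2, β_{N+1})| + h^{log₂3}, with an absolute implied constant, where S(Y,h,β) = ∑_{1 ≤ n ≤ Y} ε(n) ε(n+h) e(βn). -/

import Mathlib

/-!
Since `ε(2m) = ε(m)` and `ε(2m+1) = -ε(m)`, grouping `n = 2m, 2m+1` turns `S(Y, h, β)` into a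
combination of `S(Y/2, ⌊h/2⌋, 2β)` and `S(Y/2, ⌈h/2⌉, 2β)` with unimodular coefficients, up to two
boundary terms. Starting from `2^N ≤ h ≤ 2^(N+1)`, the shifts stay in `[2^(N-j), 2^(N+1-j)]` after
`j` halvings, so after `N` steps they are `1` or `2`, and each step at most doubles the accumulated
weight. One last halving of the shift `1` produces the shift `0`; it is controlled by
`S(Y,0,β) + (1 + e(β)) S(Y,1,β) + e(β) S(Y,2,β) = O(1)`, whose terms cancel in consecutive pairs.
This gives `|S(X,h,β)| ≤ 3^(N+1) (|S(X_{N+1},1,β_{N+1})| + |S(X_{N+1},2,β_{N+1})| + 4)`, and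
`3^N ≤ h^(log₂ 3)`.
-/

open Complex Finset

/-- `e(x) = exp(2πix)`. -/
noncomputable def e (x : ℝ) : ℂ := Complex.exp (2 * Real.pi * Complex.I * x)

/-- `ε(n) = (-1)^(s₂ n)` where `s₂` is the binary digit sum. -/
def eps (n : ℕ) : ℤ := (-1) ^ ((Nat.digits 2 n).sum)

/-- `S(Y,h,β) = ∑_{1 ≤ n ≤ Y} ε(n) ε(n+h) e(βn)`. -/
noncomputable def S (Y : ℝ) (h : ℕ) (β : ℝ) : ℂ :=
  ∑ n ∈ Finset.Icc 1 ⌊Y⌋₊, (eps n : ℂ) * (eps (n + h) : ℂ) * e (β * n)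

lemma e_add (x y : ℝ) : e (x + y) = e x * e y := by
  rw [e, e, e, ← Complex.exp_add]
  push_cast
  ring_nf

lemma norm_e (x : ℝ) : ‖e x‖ = 1 := by
  rw [e, Complex.norm_exp]
  simp

lemma eps_two_mul (m : ℕ) : eps (2 * m) = eps m := by
  rcases Nat.eq_zero_or_pos m with rfl | hm
  · rfl
  · rw [eps, eps, Nat.digits_def' one_lt_two (by omega)]
    simp

lemma eps_two_mul_add_one (m : ℕ) : eps (2 * m + 1) = -eps m := by
  rw [eps, eps, Nat.digits_def' one_lt_two (by omega)]
  simp [Nat.mul_add_div, pow_add]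

lemma norm_eps (n : ℕ) : ‖(eps n : ℂ)‖ = 1 := by
  simp [eps]

noncomputable def summand (h : ℕ) (β : ℝ) (n : ℕ) : ℂ := eps n * eps (n + h) * e (β * n)

lemma norm_summand (h : ℕ) (β : ℝ) (n : ℕ) : ‖summand h β n‖ = 1 := by
  rw [summand, norm_mul, norm_mul, norm_eps, norm_eps, norm_e, one_mul, one_mul]

lemma summand_pair_two_mul (k : ℕ) (β : ℝ) (m : ℕ) :
    summand (2 * k) β (2 * m) + summand (2 * k) β (2 * m + 1)
      = (1 + e β) * summand k (2 * β) m := by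
  have h₀ : 2 * m + 2 * k = 2 * (m + k) := by ring
  have h₁ : 2 * m + 1 + 2 * k = 2 * (m + k) + 1 := by ring
  have hβ : β * ((2 * m + 1 : ℕ) : ℝ) = 2 * β * m + β := by push_cast; ring
  simp only [summand, h₀, h₁, hβ, e_add, eps_two_mul, eps_two_mul_add_one]
  push_cast
  ring_nf

lemma summand_pair_two_mul_add_one (k : ℕ) (β : ℝ) (m : ℕ) :
    summand (2 * k + 1) β (2 * m) + summand (2 * k + 1) β (2 * m + 1)
      = -(summand k (2 * β) m + e β * summand (k + 1) (2 * β) m) := by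
  have h₀ : 2 * m + (2 * k + 1) = 2 * (m + k) + 1 := by ring
  have h₁ : 2 * m + 1 + (2 * k + 1) = 2 * (m + (k + 1)) := by ring
  have hβ : β * ((2 * m + 1 : ℕ) : ℝ) = 2 * β * m + β := by push_cast; ring
  simp only [summand, h₀, h₁, hβ, e_add, eps_two_mul, eps_two_mul_add_one]
  push_cast
  ring_nf

lemma sum_Icc_two_mul_add_one {M : Type*} [AddCommMonoid M] (f : ℕ → M) (a : ℕ) :
    ∑ n ∈ Icc 1 (2 * a + 1), f n = f 1 + ∑ m ∈ Icc 1 a, (f (2 * m) + f (2 * m + 1)) := by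
  induction a with
  | zero => simp
  | succ a ih =>
    rw [show 2 * (a + 1) + 1 = 2 * a + 1 + 1 + 1 by ring, sum_Icc_succ_top (by omega),
      sum_Icc_succ_top (by omega), ih, sum_Icc_succ_top (by omega), add_assoc, add_assoc,
      show 2 * a + 1 + 1 = 2 * (a + 1) by ring]

lemma norm_sum_Icc_sub_sum_pairs_le {E : Type*} [SeminormedAddCommGroup E] (f : ℕ → E) {B : ℝ}
    (hf : ∀ n, ‖f n‖ ≤ B) (M : ℕ) :
    ‖∑ n ∈ Icc 1 M, f n - ∑ m ∈ Icc 1 (M / 2), (f (2 * m) + f (2 * m + 1))‖ ≤ 2 * B := by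
  have hB : 0 ≤ B := (norm_nonneg _).trans (hf 0)
  obtain ⟨a, rfl | rfl⟩ := Nat.even_or_odd' M
  · have hsplit := sum_Icc_two_mul_add_one f a
    rw [sum_Icc_succ_top (by omega)] at hsplit
    rw [Nat.mul_div_cancel_left _ two_pos, eq_sub_of_add_eq hsplit, add_sub_right_comm,
      add_sub_cancel_right]
    calc ‖f 1 - f (2 * a + 1)‖ ≤ ‖f 1‖ + ‖f (2 * a + 1)‖ := norm_sub_le _ _
      _ ≤ 2 * B := by linarith [hf 1, hf (2 * a + 1)]
  · rw [sum_Icc_two_mul_add_one, show (2 * a + 1) / 2 = a by omega, add_sub_cancel_right]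
    linarith [hf 1]

lemma norm_one_add_e_le (x : ℝ) : ‖1 + e x‖ ≤ 2 := by
  linarith [norm_add_le 1 (e x), norm_one (α := ℂ), norm_e x]

lemma S_div_two (Y : ℝ) (h : ℕ) (β : ℝ) :
    S (Y / 2) h β = ∑ m ∈ Icc 1 (⌊Y⌋₊ / 2), summand h β m := by
  rw [S, Nat.floor_div_ofNat]
  rfl

lemma norm_S_sub_sum_pairs_le (Y : ℝ) (h : ℕ) (β : ℝ) :
    ‖S Y h β - ∑ m ∈ Icc 1 (⌊Y⌋₊ / 2), (summand h β (2 * m) + summand h β (2 * m + 1))‖ ≤ 2 :=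
  (norm_sum_Icc_sub_sum_pairs_le (summand h β) (fun n ↦ (norm_summand h β n).le) _).trans_eq
    (mul_one 2)

lemma norm_S_le_halves (Y : ℝ) (h : ℕ) (β : ℝ) :
    ‖S Y h β‖ ≤ ‖S (Y / 2) (h / 2) (2 * β)‖ + ‖S (Y / 2) ((h + 1) / 2) (2 * β)‖ + 2 := by
  set P := ∑ m ∈ Icc 1 (⌊Y⌋₊ / 2), (summand h β (2 * m) + summand h β (2 * m + 1))
  have hP : ‖P‖ ≤ ‖S (Y / 2) (h / 2) (2 * β)‖ + ‖S (Y / 2) ((h + 1) / 2) (2 * β)‖ := by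
    obtain ⟨k, rfl | rfl⟩ := Nat.even_or_odd' h
    · rw [show 2 * k / 2 = k by omega, show (2 * k + 1) / 2 = k by omega]
      simp only [P, summand_pair_two_mul, ← mul_sum, ← S_div_two]
      calc ‖(1 + e β) * S (Y / 2) k (2 * β)‖ ≤ 2 * ‖S (Y / 2) k (2 * β)‖ :=
            norm_mul_le_of_le (norm_one_add_e_le β) le_rfl
        _ = _ := by ring
    · rw [show (2 * k + 1) / 2 = k by omega, show (2 * k + 1 + 1) / 2 = k + 1 by omega]
      simp only [P, summand_pair_two_mul_add_one]
      simp only [sum_neg_distrib, sum_add_distrib, ← mul_sum, ← S_div_two, norm_neg]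
      calc _ ≤ _ := norm_add_le _ _
        _ = _ := by rw [norm_mul, norm_e, one_mul]
  calc ‖S Y h β‖ = ‖(S Y h β - P) + P‖ := by rw [sub_add_cancel]
    _ ≤ ‖S Y h β - P‖ + ‖P‖ := norm_add_le _ _
    _ ≤ _ := by linarith [norm_S_sub_sum_pairs_le Y h β]

lemma norm_S_zero_le (Y β : ℝ) : ‖S Y 0 β‖ ≤ 2 * ‖S Y 1 β‖ + ‖S Y 2 β‖ + 8 := by
  set c := e β
  set F : ℕ → ℂ := fun n ↦ summand 0 β n + (1 + c) * summand 1 β n + c * summand 2 β n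
  have hF : ∀ n, ‖F n‖ ≤ 4 := fun n ↦ by
    have h₁ : ‖(1 + c) * summand 1 β n‖ ≤ 2 := by
      simpa [norm_summand] using norm_mul_le_of_le (norm_one_add_e_le β) (norm_summand 1 β n).le
    have h₂ : ‖c * summand 2 β n‖ = 1 := by rw [norm_mul, norm_e, norm_summand, one_mul]
    linarith [norm_add₃_le (a := summand 0 β n) (b := (1 + c) * summand 1 β n)
      (c := c * summand 2 β n), norm_summand 0 β n]
  have hpairs : ∀ m, F (2 * m) + F (2 * m + 1) = 0 := fun m ↦ by
    have h₀ := summand_pair_two_mul 0 β m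
    have h₁ := summand_pair_two_mul_add_one 0 β m
    have h₂ := summand_pair_two_mul 1 β m
    simp only [mul_zero, mul_one, zero_add] at h₀ h₁ h₂
    simp only [F]
    linear_combination h₀ + (1 + c) * h₁ + c * h₂
  have hsum : ∑ n ∈ Icc 1 ⌊Y⌋₊, F n = S Y 0 β + (1 + c) * S Y 1 β + c * S Y 2 β := by
    simp only [F, sum_add_distrib, ← mul_sum]
    rfl
  have hF_sum := norm_sum_Icc_sub_sum_pairs_le F hF ⌊Y⌋₊
  simp only [hpairs, sum_const_zero, sub_zero, hsum] at hF_sum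
  have h₁ : ‖(1 + c) * S Y 1 β‖ ≤ 2 * ‖S Y 1 β‖ := norm_mul_le_of_le (norm_one_add_e_le β) le_rfl
  have h₂ : ‖c * S Y 2 β‖ = ‖S Y 2 β‖ := by rw [norm_mul, norm_e, one_mul]
  calc ‖S Y 0 β‖
      = ‖(S Y 0 β + (1 + c) * S Y 1 β + c * S Y 2 β) + -((1 + c) * S Y 1 β) + -(c * S Y 2 β)‖ := by
        congr 1; ring
    _ ≤ ‖S Y 0 β + (1 + c) * S Y 1 β + c * S Y 2 β‖ + ‖-((1 + c) * S Y 1 β)‖ + ‖-(c * S Y 2 β)‖ :=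
        norm_add₃_le
    _ ≤ _ := by rw [norm_neg, norm_neg]; linarith

lemma norm_S_le_three_pow (N : ℕ) {h : ℕ} (hlo : 2 ^ N ≤ h) (hhi : h ≤ 2 ^ (N + 1)) (Y β : ℝ) :
    ‖S Y h β‖ ≤ 3 ^ (N + 1) * (‖S (Y / 2 ^ (N + 1)) 1 (2 ^ (N + 1) * β)‖ +
      ‖S (Y / 2 ^ (N + 1)) 2 (2 ^ (N + 1) * β)‖ + 4) := by
  induction N generalizing h Y β with
  | zero =>
    norm_num at hlo hhi ⊢
    have h₀ := norm_S_zero_le (Y / 2) (2 * β)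
    have h₁ := norm_nonneg (S (Y / 2) 1 (2 * β))
    have h₂ := norm_nonneg (S (Y / 2) 2 (2 * β))
    interval_cases h
    · linarith [norm_S_le_halves Y 1 β]
    · linarith [norm_S_le_halves Y 2 β]
  | succ N ih =>
    have hY : Y / 2 / 2 ^ (N + 1) = Y / 2 ^ (N + 1 + 1) := by ring
    have hβ : 2 ^ (N + 1) * (2 * β) = 2 ^ (N + 1 + 1) * β := by ring
    set Q := ‖S (Y / 2 ^ (N + 1 + 1)) 1 (2 ^ (N + 1 + 1) * β)‖ +
      ‖S (Y / 2 ^ (N + 1 + 1)) 2 (2 ^ (N + 1 + 1) * β)‖ + 4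
    have hQ : 4 ≤ Q := le_add_of_nonneg_left (by positivity)
    have hp₁ : 2 ^ (N + 1) = 2 * 2 ^ N := pow_succ' 2 N
    have hp₂ : 2 ^ (N + 1 + 1) = 4 * 2 ^ N := by ring
    have hchild : ∀ k, 2 * k ≤ h + 1 → h ≤ 2 * k + 1 → ‖S (Y / 2) k (2 * β)‖ ≤ 3 ^ (N + 1) * Q := by
      intro k hk₁ hk₂
      have := ih (h := k) (by omega) (by omega) (Y / 2) (2 * β)
      rwa [hY, hβ] at this
    have h₁ := hchild (h / 2) (by omega) (by omega)
    have h₂ := hchild ((h + 1) / 2) (by omega) (by omega)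
    have h₃ : (1 : ℝ) ≤ 3 ^ (N + 1) := one_le_pow₀ (by norm_num)
    have h₄ : 4 ≤ 3 ^ (N + 1) * Q := by nlinarith
    calc ‖S Y h β‖ ≤ 3 ^ (N + 1) * Q + 3 ^ (N + 1) * Q + 2 := by
          linarith [norm_S_le_halves Y h β]
      _ ≤ 3 ^ (N + 1 + 1) * Q := by rw [pow_succ 3 (N + 1)]; linarith

lemma three_pow_le_rpow_logb_two_three {x : ℝ} {N : ℕ} (hx : 2 ^ N ≤ x) :
    (3 : ℝ) ^ N ≤ x ^ Real.logb 2 3 :=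
  calc (3 : ℝ) ^ N = ((2 : ℝ) ^ N) ^ Real.logb 2 3 := by
        rw [← Real.rpow_natCast, ← Real.rpow_natCast, ← Real.rpow_mul zero_le_two, mul_comm,
          Real.rpow_mul zero_le_two, Real.rpow_logb two_pos (by norm_num) three_pos]
    _ ≤ x ^ Real.logb 2 3 :=
        Real.rpow_le_rpow (by positivity) hx (Real.logb_nonneg one_lt_two (by norm_num))

theorem lemma_two : ∃ C : ℝ, 0 < C ∧ ∀ (β X : ℝ) (h N : ℕ),
    2 < X → 2 < h → 2 ^ N ≤ h → h < 2 ^ (N + 1) →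
    ‖S X h β‖ ≤
      C * ((h : ℝ) ^ (Real.logb 2 3) * ‖S (X / 2 ^ (N + 1)) 1 (2 ^ (N + 1) * β)‖ +
           (h : ℝ) ^ (Real.logb 2 3) * ‖S (X / 2 ^ (N + 1)) 2 (2 ^ (N + 1) * β)‖ +
           (h : ℝ) ^ (Real.logb 2 3)) := by
  refine ⟨12, by norm_num, fun β X h N _ _ hlo hhi ↦ ?_⟩
  set A := ‖S (X / 2 ^ (N + 1)) 1 (2 ^ (N + 1) * β)‖
  set B := ‖S (X / 2 ^ (N + 1)) 2 (2 ^ (N + 1) * β)‖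
  set H := (h : ℝ) ^ Real.logb 2 3
  have hH : (3 : ℝ) ^ N ≤ H := three_pow_le_rpow_logb_two_three (by exact_mod_cast hlo)
  have hA : 0 ≤ H * A := by positivity
  have hB : 0 ≤ H * B := by positivity
  calc ‖S X h β‖ ≤ 3 ^ (N + 1) * (A + B + 4) := norm_S_le_three_pow N hlo hhi.le X β
    _ ≤ 3 * H * (A + B + 4) := by rw [pow_succ']; gcongr
    _ ≤ 12 * (H * A + H * B + H) := by linarith
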